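/- arXiv:1501.02716 — 2 statements merged into one kernel-verified Lean document; each statement's English description precedes it below -/
import Mathlib

section
/- For any two directed graphs G' and G'' on the same vertex set, each having exactly one root component, there is a finite sequence of graphs G' = G_0, G_1, ..., G_m = G'' such that each G_i has exactly one root component and consecutive graphs differ in at most one edge. Moreover, if the root components of G' and G'' have the same vertex set R, then the construction can be done so that every intermediate graph has root component with vertex set R. -/
/-- A root component of a directed graph `G`: a strongly connected component
(maximal set of mutually reachable vertices) with no incoming edges from outside. -/
def IsRootComponent {V : Type*} (G : V → V → Prop) (R : Set V) : Prop :=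
  R.Nonempty ∧ (∀ p ∈ R, ∀ q ∈ R, Relation.ReflTransGen G p q) ∧
    ∀ p ∈ R, ∀ q, G q p → q ∈ R

/-- A causal influence chain of length `k` from `p` (starting in round `r`) to `q`. -/
def InflChain {V : Type*} (G : ℕ → V → V → Prop) (r : ℕ) (p q : V) (k : ℕ) : Prop :=
  ∃ f : ℕ → V, f 0 = p ∧ f k = q ∧ ∀ i < k, f i = f (i + 1) ∨ G (r + i) (f i) (f (i + 1))

/-- The dynamic causal distance `cd_r(p,q)`: length of the shortest causal influence
chain from `p` starting in round `r` to `q` (`⊤` if none exists, `1` for `p = q`). -/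
noncomputable def cd {V : Type*} (G : ℕ → V → V → Prop) (r : ℕ) (p q : V) : ℕ∞ :=
  sInf {k : ℕ∞ | ∃ m : ℕ, k = (m : ℕ∞) ∧ 1 ≤ m ∧ InflChain G r p q m}

/-- Two graphs differ in at most one edge. -/
def DiffAtMostOneEdge {V : Type*} (G G' : V → V → Prop) : Prop :=
  ∃ a b : V, ∀ x y : V, ¬ (x = a ∧ y = b) → (G x y ↔ G' x y)

/-!
For finitely many vertices, `G` has exactly one root component iff some vertex reaches every
vertex, and `G` has root component `R` and no other iff every vertex of `R` reaches every vertex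
and no edge enters `R` from outside. Each condition (together with irreflexivity) is the
conjunction of a property preserved by adding edges and one preserved by deleting edges. So it
holds for every `H` with `G ≤ H ≤ G ⊔ G'` or `G' ≤ H ≤ G ⊔ G'`, and the path adds the edges of
`G'` to `G` one at a time, then deletes those of `G` not in `G'` one at a time.
-/

open Relation

section

variable {V : Type*} {G H : V → V → Prop} {R : Set V}

namespace IsRootComponent

theorem mem_of_reflTransGen (hR : IsRootComponent G R) {x y : V} (h : ReflTransGen G x y)
    (hy : y ∈ R) : x ∈ R := by
  induction h with
  | refl => exact hy
  | tail _ hbc ih => exact ih (hR.2.2 _ hy _ hbc)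

theorem eq_setOf_reflTransGen (hR : IsRootComponent G R) {v : V} (hv : v ∈ R) :
    R = {x | ReflTransGen G x v} :=
  Set.ext fun x => ⟨fun hx => hR.2.1 x hx v hv, fun hx => hR.mem_of_reflTransGen hx hv⟩

end IsRootComponent

theorem isRootComponent_setOf_reflTransGen {v : V} (hv : ∀ u, ReflTransGen G v u) :
    IsRootComponent G {x | ReflTransGen G x v} :=
  ⟨⟨v, .refl⟩, fun _ hp q _ => hp.trans (hv q), fun _ hp _ hq => hp.head hq⟩

theorem existsUnique_isRootComponent_of_reflTransGen {v : V} (hv : ∀ u, ReflTransGen G v u) :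
    ∃! R, IsRootComponent G R := by
  refine ⟨_, isRootComponent_setOf_reflTransGen hv, fun R hR => ?_⟩
  obtain ⟨q, hq⟩ := hR.1
  exact hR.eq_setOf_reflTransGen (hR.mem_of_reflTransGen (hv q) hq)

/-- The ancestors of a vertex `u` with a minimal set of ancestors among those of `v` form a root
component. -/
theorem exists_isRootComponent_reflTransGen [Finite V] (G : V → V → Prop) (v : V) :
    ∃ R, IsRootComponent G R ∧ ∃ p ∈ R, ReflTransGen G p v := by
  obtain ⟨u, huv, hmin⟩ := Set.Finite.exists_minimalFor (fun u => {x | ReflTransGen G x u})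
    {u | ReflTransGen G u v} (Set.toFinite _) ⟨v, .refl⟩
  have hback : ∀ x, ReflTransGen G x u → ReflTransGen G u x := fun x hxu =>
    hmin (hxu.trans huv) (fun _ hy => hy.trans hxu) .refl
  exact ⟨{x | ReflTransGen G x u},
    ⟨⟨u, .refl⟩, fun _ hp q hq => hp.trans (hback q hq), fun _ hp _ hq => hp.head hq⟩,
    u, .refl, huv⟩

theorem IsRootComponent.reflTransGen_of_existsUnique [Finite V]
    (h : ∃! R, IsRootComponent G R) (hR : IsRootComponent G R) {p : V} (hp : p ∈ R) (u : V) :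
    ReflTransGen G p u := by
  obtain ⟨R', hR', q, hq, hqu⟩ := exists_isRootComponent_reflTransGen G u
  rw [h.unique hR' hR] at hq
  exact (hR.2.1 p hp q hq).trans hqu

theorem existsUnique_isRootComponent_iff [Finite V] :
    (∃! R, IsRootComponent G R) ↔ ∃ v, ∀ u, ReflTransGen G v u := by
  refine ⟨fun h => ?_, fun ⟨_, hv⟩ => existsUnique_isRootComponent_of_reflTransGen hv⟩
  obtain ⟨R, hR⟩ := h.exists
  obtain ⟨v, hv⟩ := hR.1
  exact ⟨v, hR.reflTransGen_of_existsUnique h hv⟩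

def IsRootedAt (G : V → V → Prop) (R : Set V) : Prop :=
  IsRootComponent G R ∧ ∀ p ∈ R, ∀ u, ReflTransGen G p u

theorem isRootedAt_iff [Finite V] :
    IsRootedAt G R ↔ IsRootComponent G R ∧ ∃! R', IsRootComponent G R' := by
  refine ⟨fun ⟨hR, hreach⟩ => ⟨hR, ?_⟩,
    fun ⟨hR, h⟩ => ⟨hR, fun _ => hR.reflTransGen_of_existsUnique h⟩⟩
  obtain ⟨p, hp⟩ := hR.1
  exact existsUnique_isRootComponent_of_reflTransGen (hreach p hp)

theorem IsRootedAt.mono {G' : V → V → Prop} (hG : IsRootedAt G R) (hGG' : G ≤ G')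
    (hclosed : ∀ p ∈ R, ∀ q, G' q p → q ∈ R) : IsRootedAt G' R :=
  ⟨⟨hG.1.1, fun p hp q hq => ReflTransGen.mono hGG' _ _ (hG.1.2.1 p hp q hq), hclosed⟩,
    fun p hp u => ReflTransGen.mono hGG' _ _ (hG.2 p hp u)⟩

theorem Irreflexive.of_le_sup {G' : V → V → Prop} (hG : Irreflexive G) (hG' : Irreflexive G')
    (hH : H ≤ G ⊔ G') : Irreflexive H :=
  fun x hx => (hH x x hx).elim (hG x) (hG' x)

theorem Relation.ReflTransGen.exists_seq {α : Type*} {r : α → α → Prop} {a b : α}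
    (h : ReflTransGen r a b) :
    ∃ (m : ℕ) (f : ℕ → α), f 0 = a ∧ f m = b ∧ ∀ i < m, r (f i) (f (i + 1)) := by
  induction h with
  | refl => exact ⟨0, fun _ => a, rfl, rfl, by simp⟩
  | @tail b c _ hbc ih =>
    obtain ⟨m, f, h0, hm, hf⟩ := ih
    refine ⟨m + 1, fun i => if i ≤ m then f i else c, by simpa using h0, by simp, fun i hi => ?_⟩
    rcases Nat.lt_or_ge i m with h | h
    · simpa [h.le, Nat.succ_le_of_lt h] using hf i h
    · obtain rfl : i = m := by omega
      simpa [hm] using hbc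

section EdgeFlip

variable {P : (V → V → Prop) → Prop} {A B : V → V → Prop}

def EdgeFlip (P : (V → V → Prop) → Prop) (A B : V → V → Prop) : Prop :=
  P A ∧ P B ∧ DiffAtMostOneEdge A B

instance : Std.Symm (EdgeFlip P) where
  symm _ _ := fun ⟨hA, hB, a, b, h⟩ => ⟨hB, hA, a, b, fun x y hxy => (h x y hxy).symm⟩

theorem reflTransGen_edgeFlip_of_le [Finite V] (hAB : A ≤ B)
    (hP : ∀ H, A ≤ H → H ≤ B → P H) : ReflTransGen (EdgeFlip P) A B := by
  classical
  have := Fintype.ofFinite V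
  let addEdges (s : Finset (V × V)) : V → V → Prop := fun x y => A x y ∨ ((x, y) ∈ s ∧ B x y)
  have hP' (s) : P (addEdges s) :=
    hP _ (fun _ _ => Or.inl) fun x y => Or.rec (hAB x y) And.right
  have key (s : Finset (V × V)) : ReflTransGen (EdgeFlip P) A (addEdges s) := by
    induction s using Finset.induction_on with
    | empty => simpa [addEdges] using ReflTransGen.refl
    | insert e s _ ih =>
      refine ih.tail ⟨hP' s, hP' _, e.1, e.2, fun x y hxy => ?_⟩
      have : (x, y) ≠ e := fun h => hxy (by simp [← h])
      simp [addEdges, Finset.mem_insert, this]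
  convert key Finset.univ
  ext x y
  simpa [addEdges] using hAB x y

theorem reflTransGen_edgeFlip_of_le_sup [Finite V]
    (hP : ∀ H, A ≤ H ∨ B ≤ H → H ≤ A ⊔ B → P H) : ReflTransGen (EdgeFlip P) A B :=
  (reflTransGen_edgeFlip_of_le le_sup_left fun H hAH hH => hP H (.inl hAH) hH).trans <|
    symm <| reflTransGen_edgeFlip_of_le le_sup_right fun H hBH hH => hP H (.inr hBH) hH

theorem exists_edgeFlip_seq (h : ReflTransGen (EdgeFlip P) A B) (hB : P B) :
    ∃ (m : ℕ) (F : ℕ → V → V → Prop), F 0 = A ∧ F m = B ∧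
      (∀ i ≤ m, P (F i)) ∧ ∀ i < m, DiffAtMostOneEdge (F i) (F (i + 1)) := by
  obtain ⟨m, F, h0, hm, hF⟩ := h.exists_seq
  refine ⟨m, F, h0, hm, fun i hi => ?_, fun i hi => (hF i hi).2.2⟩
  rcases hi.lt_or_eq with hi | rfl
  · exact (hF i hi).1
  · exact hm ▸ hB

end EdgeFlip

end

/-- Connectedness of single-rooted graphs under one-edge modifications: any two
simple digraphs `G`, `G'` on the same vertex set, each with exactly one root
component, are joined by a finite sequence of simple digraphs, each with exactly
one root component, where consecutive graphs differ in at most one edge.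
Moreover, if `G` and `G'` have the same root component vertex set `R`, the
sequence can be chosen so that every intermediate graph has root component `R`. -/
theorem stmt_10 {V : Type*} [Fintype V] (G G' : V → V → Prop)
    (hG : Irreflexive G) (hG' : Irreflexive G')
    (h1 : ∃! R : Set V, IsRootComponent G R)
    (h1' : ∃! R : Set V, IsRootComponent G' R) :
    (∃ (m : ℕ) (F : ℕ → V → V → Prop), F 0 = G ∧ F m = G' ∧
      (∀ i ≤ m, Irreflexive (F i) ∧ ∃! R : Set V, IsRootComponent (F i) R) ∧
      ∀ i < m, DiffAtMostOneEdge (F i) (F (i + 1))) ∧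
    (∀ R : Set V, IsRootComponent G R → IsRootComponent G' R →
      ∃ (m : ℕ) (F : ℕ → V → V → Prop), F 0 = G ∧ F m = G' ∧
        (∀ i ≤ m, Irreflexive (F i) ∧ IsRootComponent (F i) R ∧
          ∃! R' : Set V, IsRootComponent (F i) R') ∧
        ∀ i < m, DiffAtMostOneEdge (F i) (F (i + 1))) := by
  constructor
  · obtain ⟨v, hv⟩ := existsUnique_isRootComponent_iff.mp h1
    obtain ⟨v', hv'⟩ := existsUnique_isRootComponent_iff.mp h1'
    refine exists_edgeFlip_seq (P := fun H => Irreflexive H ∧ ∃! R, IsRootComponent H R)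
      (reflTransGen_edgeFlip_of_le_sup fun H hle hH => ?_) ⟨hG', h1'⟩
    refine ⟨hG.of_le_sup hG' hH, existsUnique_isRootComponent_iff.mpr ?_⟩
    rcases hle with hle | hle
    · exact ⟨v, fun u => ReflTransGen.mono hle _ _ (hv u)⟩
    · exact ⟨v', fun u => ReflTransGen.mono hle _ _ (hv' u)⟩
  · intro R hGR hG'R
    have hA : IsRootedAt G R := isRootedAt_iff.mpr ⟨hGR, h1⟩
    have hB : IsRootedAt G' R := isRootedAt_iff.mpr ⟨hG'R, h1'⟩
    refine exists_edgeFlip_seq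
      (P := fun H => Irreflexive H ∧ IsRootComponent H R ∧ ∃! R', IsRootComponent H R')
      (reflTransGen_edgeFlip_of_le_sup fun H hle hH => ?_) ⟨hG', hG'R, h1'⟩
    have hclosed : ∀ p ∈ R, ∀ q, H q p → q ∈ R := fun p hp q hq =>
      (hH q p hq).elim (hGR.2.2 p hp q) (hG'R.2.2 p hp q)
    refine ⟨hG.of_le_sup hG' hH, isRootedAt_iff.mp ?_⟩
    rcases hle with hle | hle
    · exact hA.mono hle hclosed
    · exact hB.mono hle hclosed
end

section
/- In the k-set agreement algorithm, for any D-bounded vertex-stable root component R^I with I = [a,b] and b >= a + D, in every round x in [a+D, b], any two members p_i, p_j of R have identical accumulated histories up to round a: the union over r' <= a of hist_i[j][r'] equals the union over r' <= a of hist_j[j][r']. -/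
open Set

structure IsFloodingHistory {V L : Type*} [DecidableEq V] (G : ℕ → V → V → Prop)
    (hist : V → ℕ → V → ℕ → Set L) (created : V → ℕ → Set L) : Prop where
  init : ∀ p j r', hist p 0 j r' = if j = p ∧ r' = 0 then created p 0 else (∅ : Set L)
  others : ∀ p r j r', j ≠ p → hist p (r + 1) j r' =
    hist p r j r' ∪ ⋃ q ∈ {q | q ≠ p ∧ G (r + 1) q p}, hist q r j r'
  own_old : ∀ p r r', r' ≤ r → hist p (r + 1) p r' = hist p r p r'
  own_future : ∀ p r r', r + 1 < r' → hist p (r + 1) p r' = ∅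

namespace IsFloodingHistory

variable {V L : Type*} [DecidableEq V] {G : ℕ → V → V → Prop}
  {hist : V → ℕ → V → ℕ → Set L} {created : V → ℕ → Set L}

theorem self_eq_empty_of_lt (h : IsFloodingHistory G hist created) {j : V} {s r' : ℕ}
    (hs : s < r') : hist j s j r' = ∅ := by
  cases s with
  | zero => simp [h.init, Nat.pos_iff_ne_zero.mp hs]
  | succ s => exact h.own_future j s r' hs

theorem monotone (h : IsFloodingHistory G hist created) (p j : V) (r' : ℕ) :
    Monotone fun s => hist p s j r' := by
  refine monotone_nat_of_le_succ fun s => ?_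
  show hist p s j r' ⊆ hist p (s + 1) j r'
  by_cases hpj : p = j
  · subst hpj
    rcases le_or_gt r' s with hr | hr
    · rw [h.own_old p s r' hr]
    · rw [h.self_eq_empty_of_lt hr]
      exact empty_subset _
  · rw [h.others p s j r' (Ne.symm hpj)]
    exact subset_union_left

theorem subset_self (h : IsFloodingHistory G hist created) (p j : V) (s r' : ℕ) :
    hist p s j r' ⊆ hist j s j r' := by
  induction s generalizing p with
  | zero =>
    by_cases hjp : j = p
    · subst hjp
      rfl
    · simp [h.init, hjp]
  | succ s ih =>
    by_cases hpj : p = j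
    · subst hpj
      rfl
    rw [h.others p s j r' (Ne.symm hpj)]
    have hmono := h.monotone j j r' s.le_succ
    exact union_subset ((ih p).trans hmono) (iUnion₂_subset fun q _ => (ih q).trans hmono)

theorem subset_of_adj (h : IsFloodingHistory G hist created) {p q j : V} {s r' : ℕ}
    (hG : G (s + 1) q p) : hist q s j r' ⊆ hist p (s + 1) j r' := by
  by_cases hpj : p = j
  · subst hpj
    exact (h.subset_self q p s r').trans (h.monotone p p r' s.le_succ)
  by_cases hqp : q = p
  · subst hqp
    exact h.monotone q j r' s.le_succ
  rw [h.others p s j r' (Ne.symm hpj)]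
  exact subset_union_of_subset_right
    (subset_biUnion_of_mem (u := fun q => hist q s j r') (show q ∈ {q | q ≠ p ∧ G (s + 1) q p}
      from ⟨hqp, hG⟩)) _

theorem subset_of_inflChain (h : IsFloodingHistory G hist created) {p q j : V} {s r' m : ℕ}
    (hc : InflChain G (s + 1) p q m) : hist p s j r' ⊆ hist q (s + m) j r' := by
  obtain ⟨f, rfl, rfl, hstep⟩ := hc
  suffices ∀ k ≤ m, hist (f 0) s j r' ⊆ hist (f k) (s + k) j r' from this m le_rfl
  intro k
  induction k with
  | zero => exact fun _ => subset_rfl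
  | succ k ih =>
    intro hk
    refine (ih (by omega)).trans ?_
    rcases hstep k (by omega) with heq | hG
    · rw [← heq]
      exact h.monotone _ _ _ (by omega)
    · rw [← add_assoc]
      exact h.subset_of_adj (by rwa [add_right_comm] at hG)

theorem self_eq_of_le (h : IsFloodingHistory G hist created) {j : V} {r' a t : ℕ}
    (hr : r' ≤ a) (hat : a ≤ t) : hist j t j r' = hist j a j r' := by
  induction t, hat using Nat.le_induction with
  | base => rfl
  | succ t hat ih => rw [h.own_old j t r' (by omega), ih]

end IsFloodingHistory

theorem exists_inflChain_of_cd_le {V : Type*} {G : ℕ → V → V → Prop} {r : ℕ} {p q : V} {D : ℕ}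
    (hcd : cd G r p q ≤ D) : ∃ m ≤ D, InflChain G r p q m := by
  obtain ⟨_, ⟨m, rfl, -, hm⟩, hlt⟩ :=
    sInf_lt_iff.mp (hcd.trans_lt (ENat.natCast_lt_natCast.mpr D.lt_succ_self))
  exact ⟨m, Nat.lt_succ_iff.mp (by exact_mod_cast hlt), hm⟩

theorem stmt_18_general {V : Type*} [DecidableEq V] {L : Type*} (G : ℕ → V → V → Prop)
    (hist : V → ℕ → V → ℕ → Set L)
    (created : V → ℕ → Set L)
    -- initial history: only the virtual initial lock of `p` itself
    (hinit : ∀ p j r', hist p 0 j r' = if j = p ∧ r' = 0 then created p 0 else (∅ : Set L))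
    -- merge received entries about other processes
    (hothers : ∀ p r j r', j ≠ p → hist p (r + 1) j r' =
      hist p r j r' ∪ ⋃ q ∈ {q | q ≠ p ∧ G (r + 1) q p}, hist q r j r')
    -- own past entries are never modified
    (hown_old : ∀ p r r', r' ≤ r → hist p (r + 1) p r' = hist p r p r')
    -- entries about future rounds are empty
    (hown_future : ∀ p r r', r + 1 < r' → hist p (r + 1) p r' = ∅)
    (R : Set V) (a b D : ℕ)
    (hab : a + D ≤ b)
    (hDbounded : ∀ x, a ≤ x → x + D ≤ b + 1 →
      ∀ p ∈ R, ∀ q ∈ R, cd G x p q ≤ (D : ℕ∞)) :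
    ∀ x, a + D ≤ x → x ≤ b → ∀ i ∈ R, ∀ j ∈ R,
      (⋃ (r' : ℕ) (_ : r' ≤ a), hist i x j r') =
        ⋃ (r' : ℕ) (_ : r' ≤ a), hist j x j r' := by
  intro x hx _ i hi j hj
  have hflood : IsFloodingHistory G hist created := ⟨hinit, hothers, hown_old, hown_future⟩
  obtain ⟨m, hmD, hchain⟩ :=
    exists_inflChain_of_cd_le (hDbounded (a + 1) (by omega) (by omega) j hj i hi)
  refine Subset.antisymm (iUnion₂_mono fun r' _ => hflood.subset_self i j x r')
    (iUnion₂_mono fun r' hr' => ?_)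
  calc hist j x j r' = hist j a j r' := hflood.self_eq_of_le hr' (by omega)
    _ ⊆ hist i (a + m) j r' := hflood.subset_of_inflChain hchain
    _ ⊆ hist i x j r' := hflood.monotone i j r' (by omega)

/-- Consistent histories in a `D`-bounded VSRC: processes run the full-information
flooding protocol on lock histories, where `hist p r j r'` is the content of
`hist_p[j][r']` at the end of round `r` and `created p r` are the locks process
`p` creates in round `r` (including the virtual initial lock at round `0`).
Each process broadcasts its entire history each round, merges received entries,
and adds newly learned locks to its own current-round entry; entries are never
removed.  If `R^I` is a `D`-bounded `I`-vertex-stable root component with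
`I = [a,b]` and `b ≥ a + D`, then in every round `x ∈ [a+D, b]` any two members
`i, j ∈ R` have identical accumulated histories up to round `a`:
`⋃_{r' ≤ a} hist_i[j][r'] = ⋃_{r' ≤ a} hist_j[j][r']`. -/
theorem stmt_18 {V : Type*} [Fintype V] [DecidableEq V] {L : Type*} (G : ℕ → V → V → Prop)
    (hist : V → ℕ → V → ℕ → Set L)
    (created : V → ℕ → Set L)
    -- initial history: only the virtual initial lock of `p` itself
    (hinit : ∀ p j r', hist p 0 j r' = if j = p ∧ r' = 0 then created p 0 else (∅ : Set L))
    -- merge received entries about other processes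
    (hothers : ∀ p r j r', j ≠ p → hist p (r + 1) j r' =
      hist p r j r' ∪ ⋃ q ∈ {q | q ≠ p ∧ G (r + 1) q p}, hist q r j r')
    -- own past entries are never modified
    (hown_old : ∀ p r r', r' ≤ r → hist p (r + 1) p r' = hist p r p r')
    -- own current-round entry: newly created locks plus all newly learned locks
    (hown_new : ∀ p r, hist p (r + 1) p (r + 1) =
      created p (r + 1) ∪
        ⋃ j ∈ {j | j ≠ p}, ⋃ r' : ℕ,
          ((hist p r j r' ∪ ⋃ q ∈ {q | q ≠ p ∧ G (r + 1) q p}, hist q r j r') \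
            hist p r j r'))
    -- entries about future rounds are empty
    (hown_future : ∀ p r r', r + 1 < r' → hist p (r + 1) p r' = ∅)
    (R : Set V) (a b D : ℕ) (ha : 1 ≤ a)
    (hab : a + D ≤ b)
    (hVSRC : ∀ x, a ≤ x → x ≤ b → IsRootComponent (G x) R)
    (hDbounded : ∀ x, a ≤ x → x + D ≤ b + 1 →
      ∀ p ∈ R, ∀ q ∈ R, cd G x p q ≤ (D : ℕ∞)) :
    ∀ x, a + D ≤ x → x ≤ b → ∀ i ∈ R, ∀ j ∈ R,
      (⋃ (r' : ℕ) (_ : r' ≤ a), hist i x j r') =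
        ⋃ (r' : ℕ) (_ : r' ≤ a), hist j x j r' :=
  stmt_18_general G hist created hinit hothers hown_old hown_future R a b D hab hDbounded
end
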